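/- arXiv:1907.04734 — 2 statements merged into one kernel-verified Lean document; each statement's English description precedes it below -/
import Mathlib

section
/- Let G be a compact Hausdorff topological group with normalized Haar probability measure μ, and let π and ρ be irreducible representations of G on complex inner product spaces V and W respectively. Let T: V → V and T': W → W be arbitrary linear maps and A, B ∈ G. Then: (i) if π and ρ are not isomorphic, ∫_G tr(π(A·g) ∘ T)·tr(ρ(g⁻¹·B) ∘ T') dμ(g) = 0; and (ii) if ρ = π (so W = V), ∫_G tr(π(A·g) ∘ T)·tr(π(g⁻¹·B) ∘ T') dμ(g) = (1/dim π)·tr(π(A·B) ∘ T' ∘ T). (Specializing T, T' to twining intertwiners gives the orthogonality relation for twining characters.) -/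
open MeasureTheory

/-- `π` is a continuous unitary representation. -/
def IsContUnitaryRep {G V : Type*} [Group G] [TopologicalSpace G]
    [NormedAddCommGroup V] [InnerProductSpace ℂ V]
    (π : G →* (V →ₗ[ℂ] V)) : Prop :=
  (Continuous fun p : G × V => π p.1 p.2) ∧
    ∀ g : G, ∀ v w : V, @inner ℂ V _ (π g v) (π g w) = @inner ℂ V _ v w

/-- `π` admits no proper nonzero invariant subspace. -/
def IsIrreducibleRep {G V : Type*} [Group G]
    [AddCommGroup V] [Module ℂ V]
    (π : G →* (V →ₗ[ℂ] V)) : Prop :=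
  ∀ W : Submodule ℂ V, (∀ g : G, W.map (π g) ≤ W) → W = ⊥ ∨ W = ⊤

/-- Isomorphism of two representations. -/
def RepIso {G V W : Type*} [Group G]
    [AddCommGroup V] [Module ℂ V] [AddCommGroup W] [Module ℂ W]
    (π : G →* (V →ₗ[ℂ] V)) (ρ : G →* (W →ₗ[ℂ] W)) : Prop :=
  ∃ e : V ≃ₗ[ℂ] W, ∀ (g : G) (v : V), e (π g v) = ρ g (e v)


/-!
Averaging `X ↦ ∫ π g ∘ X ∘ ρ g⁻¹ dμ` over the group turns every linear map `X : W → V` into an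
intertwiner, so by Schur's lemma the average vanishes when `π ≇ ρ`, and for `ρ = π` it is the
scalar `tr X / dim V`, because averaging conjugates preserves the trace. Expanding both traces in
orthonormal bases writes the integrand as a sum of products `⟪u, π g v⟫ ⟪w', ρ g⁻¹ w⟫`, and the
integral of such a product is `⟪u, Φ(X) w⟫` for the average `Φ(X)` of the rank-one map
`X = ⟪w', ·⟫ v`. Cyclicity of the trace absorbs `A` and `B` into `T` and `T'`.
-/

open scoped InnerProductSpace

lemma RepIso.symm {G V W : Type*} [Group G]
    [AddCommGroup V] [Module ℂ V] [AddCommGroup W] [Module ℂ W]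
    {π : G →* (V →ₗ[ℂ] V)} {ρ : G →* (W →ₗ[ℂ] W)} (h : RepIso π ρ) : RepIso ρ π := by
  obtain ⟨e, he⟩ := h
  refine ⟨e.symm, fun g w => e.injective ?_⟩
  rw [he, LinearEquiv.apply_symm_apply, LinearEquiv.apply_symm_apply]

lemma trace_map_mul_comp {R M V : Type*} [CommRing R] [Monoid M] [AddCommGroup V] [Module R V]
    [Module.Free R V] [Module.Finite R V] (π : M →* (V →ₗ[R] V)) (a b : M) (S : V →ₗ[R] V) :
    LinearMap.trace R V (π (a * b) ∘ₗ S) = LinearMap.trace R V (π b ∘ₗ S ∘ₗ π a) := by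
  rw [map_mul, Module.End.mul_eq_comp, LinearMap.comp_assoc, LinearMap.trace_comp_comm',
    LinearMap.comp_assoc]

section Schur

variable {G V W : Type*} [Group G] [AddCommGroup V] [Module ℂ V] [AddCommGroup W] [Module ℂ W]
  {π : G →* (V →ₗ[ℂ] V)} {ρ : G →* (W →ₗ[ℂ] W)} {f : V →ₗ[ℂ] W}

lemma map_ker_le_ker_of_intertwines (hf : ∀ g, ρ g ∘ₗ f = f ∘ₗ π g) (g : G) :
    (LinearMap.ker f).map (π g) ≤ LinearMap.ker f := by
  rintro _ ⟨v, hv, rfl⟩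
  rw [SetLike.mem_coe, LinearMap.mem_ker] at hv
  rw [LinearMap.mem_ker, ← LinearMap.comp_apply, ← hf, LinearMap.comp_apply, hv, map_zero]

lemma map_range_le_range_of_intertwines (hf : ∀ g, ρ g ∘ₗ f = f ∘ₗ π g) (g : G) :
    (LinearMap.range f).map (ρ g) ≤ LinearMap.range f := by
  rintro _ ⟨_, ⟨v, rfl⟩, rfl⟩
  exact ⟨π g v, by rw [← LinearMap.comp_apply, ← hf, LinearMap.comp_apply]⟩

theorem eq_zero_of_intertwines (hπ : IsIrreducibleRep π) (hρ : IsIrreducibleRep ρ)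
    (hπρ : ¬ RepIso π ρ) (hf : ∀ g, ρ g ∘ₗ f = f ∘ₗ π g) : f = 0 := by
  rcases hπ _ (map_ker_le_ker_of_intertwines hf) with hker | hker
  · rcases hρ _ (map_range_le_range_of_intertwines hf) with hrange | hrange
    · exact LinearMap.range_eq_bot.mp hrange
    · have hbij : Function.Bijective f :=
        ⟨LinearMap.ker_eq_bot.mp hker, LinearMap.range_eq_top.mp hrange⟩
      refine absurd ⟨LinearEquiv.ofBijective f hbij, fun g v => ?_⟩ hπρ
      simp only [LinearEquiv.ofBijective_apply, ← LinearMap.comp_apply, hf]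
  · exact LinearMap.ker_eq_top.mp hker

theorem exists_eq_smul_id_of_commutes [FiniteDimensional ℂ V] [Nontrivial V]
    (hπ : IsIrreducibleRep π) {f : V →ₗ[ℂ] V} (hf : ∀ g, π g ∘ₗ f = f ∘ₗ π g) :
    ∃ c : ℂ, f = c • 1 := by
  obtain ⟨c, hc⟩ := Module.End.exists_eigenvalue f
  have hfc : ∀ g, π g ∘ₗ (f - c • 1) = (f - c • 1) ∘ₗ π g := fun g => by
    ext v
    have hfv := LinearMap.congr_fun (hf g) v
    simp only [LinearMap.comp_apply] at hfv
    simp [hfv]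
  have hker : LinearMap.ker (f - c • 1) ≠ ⊥ := by rwa [← Module.End.eigenspace_def]
  refine ⟨c, sub_eq_zero.mp (LinearMap.ker_eq_top.mp ?_)⟩
  exact (hπ _ (map_ker_le_ker_of_intertwines hfc)).resolve_left hker

end Schur

lemma Continuous.integrable_of_compactSpace {X E : Type*} [TopologicalSpace X] [CompactSpace X]
    [MeasurableSpace X] [OpensMeasurableSpace X] {μ : Measure X} [IsFiniteMeasure μ]
    [NormedAddCommGroup E] {f : X → E} (hf : Continuous f) : Integrable f μ :=
  hf.integrable_of_hasCompactSupport (.of_compactSpace f)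

section Continuity

variable {G : Type*} [Group G] [TopologicalSpace G] [IsTopologicalGroup G]
  {V : Type*} [NormedAddCommGroup V] [NormedSpace ℂ V]
  {W : Type*} [NormedAddCommGroup W] [NormedSpace ℂ W] [FiniteDimensional ℂ W]
  {π : G →* (V →ₗ[ℂ] V)} {ρ : G →* (W →ₗ[ℂ] W)}

lemma continuous_conj_apply (hπ : Continuous fun p : G × V => π p.1 p.2)
    (hρ : Continuous fun p : G × W => ρ p.1 p.2) (X : W →ₗ[ℂ] V) (w : W) :
    Continuous fun g => π g (X (ρ g⁻¹ w)) :=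
  hπ.comp <| continuous_id.prodMk <| X.continuous_of_finiteDimensional.comp <|
    hρ.comp (continuous_inv.prodMk continuous_const)

lemma continuous_conj (hπ : Continuous fun p : G × V => π p.1 p.2)
    (hρ : Continuous fun p : G × W => ρ p.1 p.2) (X : W →ₗ[ℂ] V) :
    Continuous fun g => LinearMap.toContinuousLinearMap (π g ∘ₗ X ∘ₗ ρ g⁻¹) :=
  continuous_clm_apply.mpr (continuous_conj_apply hπ hρ X)

end Continuity

section Averaging

variable {G : Type*} [Group G] [MeasurableSpace G] (μ : Measure G)
  {V : Type*} [NormedAddCommGroup V] [NormedSpace ℂ V]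
  {W : Type*} [NormedAddCommGroup W] [NormedSpace ℂ W] [FiniteDimensional ℂ W]

noncomputable def conjAverage (π : G →* (V →ₗ[ℂ] V)) (ρ : G →* (W →ₗ[ℂ] W))
    (X : W →ₗ[ℂ] V) : W →L[ℂ] V :=
  ∫ g, LinearMap.toContinuousLinearMap (π g ∘ₗ X ∘ₗ ρ g⁻¹) ∂μ

variable [TopologicalSpace G] [IsTopologicalGroup G] [CompactSpace G] [BorelSpace G]
  {π : G →* (V →ₗ[ℂ] V)} {ρ : G →* (W →ₗ[ℂ] W)}

lemma conjAverage_apply [IsFiniteMeasure μ] (hπ : Continuous fun p : G × V => π p.1 p.2)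
    (hρ : Continuous fun p : G × W => ρ p.1 p.2) (X : W →ₗ[ℂ] V) (w : W) :
    conjAverage μ π ρ X w = ∫ g, π g (X (ρ g⁻¹ w)) ∂μ :=
  ContinuousLinearMap.integral_apply
    (continuous_conj hπ hρ X).integrable_of_compactSpace w

lemma conjAverage_intertwines [FiniteDimensional ℂ V] [IsFiniteMeasure μ] [μ.IsMulLeftInvariant]
    (hπ : Continuous fun p : G × V => π p.1 p.2)
    (hρ : Continuous fun p : G × W => ρ p.1 p.2) (X : W →ₗ[ℂ] V) (h : G) :
    π h ∘ₗ (conjAverage μ π ρ X : W →ₗ[ℂ] V) = (conjAverage μ π ρ X : W →ₗ[ℂ] V) ∘ₗ ρ h := by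
  ext w
  simp only [LinearMap.comp_apply, ContinuousLinearMap.coe_coe, conjAverage_apply μ hπ hρ]
  calc π h (∫ g, π g (X (ρ g⁻¹ w)) ∂μ)
      = ∫ g, π h (π g (X (ρ g⁻¹ w))) ∂μ :=
        (LinearMap.toContinuousLinearMap (π h)).integral_comp_comm
          (continuous_conj_apply hπ hρ X w).integrable_of_compactSpace |>.symm
    _ = ∫ g, π (h * g) (X (ρ (h * g)⁻¹ (ρ h w))) ∂μ := by simp [mul_inv_rev]
    _ = ∫ g, π g (X (ρ g⁻¹ (ρ h w))) ∂μ :=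
        integral_mul_left_eq_self (fun g => π g (X (ρ g⁻¹ (ρ h w)))) h

lemma trace_conjAverage [FiniteDimensional ℂ V] [IsProbabilityMeasure μ]
    (hπ : Continuous fun p : G × V => π p.1 p.2) (X : V →ₗ[ℂ] V) :
    LinearMap.trace ℂ V (conjAverage μ π π X) = LinearMap.trace ℂ V X := by
  let trCLM : (V →L[ℂ] V) →L[ℂ] ℂ :=
    LinearMap.toContinuousLinearMap (LinearMap.trace ℂ V ∘ₗ ContinuousLinearMap.coeLM ℂ)
  have htr : ∀ g, LinearMap.trace ℂ V (π g ∘ₗ X ∘ₗ π g⁻¹) = LinearMap.trace ℂ V X := fun g => by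
    have hinv : π g⁻¹ ∘ₗ π g = LinearMap.id := by
      rw [← Module.End.mul_eq_comp, ← map_mul, inv_mul_cancel, map_one, Module.End.one_eq_id]
    rw [LinearMap.trace_comp_comm', LinearMap.comp_assoc, hinv, LinearMap.comp_id]
  calc LinearMap.trace ℂ V (conjAverage μ π π X) = trCLM (conjAverage μ π π X) := rfl
    _ = ∫ g, LinearMap.trace ℂ V X ∂μ := by
      rw [conjAverage, ← ContinuousLinearMap.integral_comp_comm _
        (continuous_conj hπ hπ X).integrable_of_compactSpace]
      simp [trCLM, htr]
    _ = LinearMap.trace ℂ V X := by simp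

theorem conjAverage_eq_zero [FiniteDimensional ℂ V] [IsFiniteMeasure μ] [μ.IsMulLeftInvariant]
    (hπ : Continuous fun p : G × V => π p.1 p.2) (hρ : Continuous fun p : G × W => ρ p.1 p.2)
    (hπirr : IsIrreducibleRep π) (hρirr : IsIrreducibleRep ρ) (hπρ : ¬ RepIso π ρ)
    (X : W →ₗ[ℂ] V) : conjAverage μ π ρ X = 0 :=
  ContinuousLinearMap.coe_injective <| eq_zero_of_intertwines hρirr hπirr
    (fun h => hπρ h.symm) (conjAverage_intertwines μ hπ hρ X)

theorem conjAverage_self [FiniteDimensional ℂ V] [IsProbabilityMeasure μ] [μ.IsMulLeftInvariant]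
    (hπ : Continuous fun p : G × V => π p.1 p.2) (hπirr : IsIrreducibleRep π) (X : V →ₗ[ℂ] V) :
    (conjAverage μ π π X : V →ₗ[ℂ] V)
      = (LinearMap.trace ℂ V X / Module.finrank ℂ V) • 1 := by
  cases subsingleton_or_nontrivial V
  · exact Subsingleton.elim _ _
  obtain ⟨c, hc⟩ := exists_eq_smul_id_of_commutes hπirr (conjAverage_intertwines μ hπ hπ X)
  have htr := trace_conjAverage μ hπ X
  rw [hc, map_smul, LinearMap.trace_one, smul_eq_mul] at htr
  rw [hc, ← htr, mul_div_cancel_right₀ _ (by simpa using Module.finrank_pos.ne')]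

end Averaging

section MatrixCoefficients

variable {G : Type*} [Group G] [TopologicalSpace G] [IsTopologicalGroup G] [CompactSpace G]
  [MeasurableSpace G] [BorelSpace G] (μ : Measure G)
  {V : Type*} [NormedAddCommGroup V] [InnerProductSpace ℂ V] [FiniteDimensional ℂ V]
  {W : Type*} [NormedAddCommGroup W] [InnerProductSpace ℂ W] [FiniteDimensional ℂ W]
  {π : G →* (V →ₗ[ℂ] V)} {ρ : G →* (W →ₗ[ℂ] W)}

lemma integral_inner_mul_inner [IsFiniteMeasure μ] (hπ : Continuous fun p : G × V => π p.1 p.2)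
    (hρ : Continuous fun p : G × W => ρ p.1 p.2) (u v : V) (w' w : W) :
    ∫ g, ⟪u, π g v⟫_ℂ * ⟪w', ρ g⁻¹ w⟫_ℂ ∂μ
      = ⟪u, conjAverage μ π ρ ((innerₛₗ ℂ w').smulRight v) w⟫_ℂ := by
  rw [conjAverage_apply μ hπ hρ,
    ← integral_inner (continuous_conj_apply hπ hρ _ w).integrable_of_compactSpace u]
  congr 1 with g
  simp [inner_smul_right, mul_comm]

lemma integral_trace_mul_trace [IsFiniteMeasure μ] (hπ : Continuous fun p : G × V => π p.1 p.2)
    (hρ : Continuous fun p : G × W => ρ p.1 p.2) {ι κ : Type*} [Fintype ι] [Fintype κ]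
    (b : OrthonormalBasis ι ℂ V) (c : OrthonormalBasis κ ℂ W) (S : V →ₗ[ℂ] V) (T : W →ₗ[ℂ] W) :
    ∫ g, LinearMap.trace ℂ V (π g ∘ₗ S) * LinearMap.trace ℂ W (ρ g⁻¹ ∘ₗ T) ∂μ
      = ∑ i, ∑ j, ⟪b i, conjAverage μ π ρ ((innerₛₗ ℂ (c j)).smulRight (S (b i))) (T (c j))⟫_ℂ := by
  have hint : ∀ (u v : V) (w' w : W),
      Integrable (fun g => ⟪u, π g v⟫_ℂ * ⟪w', ρ g⁻¹ w⟫_ℂ) μ := fun u v w' w =>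
    Continuous.integrable_of_compactSpace <|
      (continuous_const.inner (hπ.comp (continuous_id.prodMk continuous_const))).mul
        (continuous_const.inner (hρ.comp (continuous_inv.prodMk continuous_const)))
  simp only [LinearMap.trace_eq_sum_inner _ b, LinearMap.trace_eq_sum_inner _ c,
    LinearMap.comp_apply, Finset.sum_mul_sum]
  rw [integral_finsetSum _ fun i _ => integrable_finsetSum _ fun j _ => hint _ _ _ _]
  refine Finset.sum_congr rfl fun i _ => ?_
  rw [integral_finsetSum _ fun j _ => hint _ _ _ _]
  exact Finset.sum_congr rfl fun j _ => integral_inner_mul_inner μ hπ hρ _ _ _ _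

theorem integral_trace_mul_trace_eq_zero [IsFiniteMeasure μ] [μ.IsMulLeftInvariant]
    (hπ : Continuous fun p : G × V => π p.1 p.2) (hρ : Continuous fun p : G × W => ρ p.1 p.2)
    (hπirr : IsIrreducibleRep π) (hρirr : IsIrreducibleRep ρ) (hπρ : ¬ RepIso π ρ)
    (S : V →ₗ[ℂ] V) (T : W →ₗ[ℂ] W) :
    ∫ g, LinearMap.trace ℂ V (π g ∘ₗ S) * LinearMap.trace ℂ W (ρ g⁻¹ ∘ₗ T) ∂μ = 0 := by
  simp [integral_trace_mul_trace μ hπ hρ (stdOrthonormalBasis ℂ V) (stdOrthonormalBasis ℂ W),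
    conjAverage_eq_zero μ hπ hρ hπirr hρirr hπρ]

theorem integral_trace_mul_trace_self [IsProbabilityMeasure μ] [μ.IsMulLeftInvariant]
    (hπ : Continuous fun p : G × V => π p.1 p.2) (hπirr : IsIrreducibleRep π)
    (S T : V →ₗ[ℂ] V) :
    ∫ g, LinearMap.trace ℂ V (π g ∘ₗ S) * LinearMap.trace ℂ V (π g⁻¹ ∘ₗ T) ∂μ
      = 1 / (Module.finrank ℂ V : ℂ) * LinearMap.trace ℂ V (T ∘ₗ S) := by
  set b := stdOrthonormalBasis ℂ V
  have hcoef : ∀ i j,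
      ⟪b i, conjAverage μ π π ((innerₛₗ ℂ (b j)).smulRight (S (b i))) (T (b j))⟫_ℂ
        = 1 / (Module.finrank ℂ V : ℂ) * (⟪b j, S (b i)⟫_ℂ * ⟪b i, T (b j)⟫_ℂ) := by
    intro i j
    rw [← ContinuousLinearMap.coe_coe, conjAverage_self μ hπ hπirr, LinearMap.trace_smulRight]
    simp
    ring
  have hrow : ∀ i, ∑ j, ⟪b j, S (b i)⟫_ℂ * ⟪b i, T (b j)⟫_ℂ = ⟪b i, T (S (b i))⟫_ℂ := by
    intro i
    conv_rhs => rw [← b.sum_repr' (S (b i))]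
    simp
  rw [integral_trace_mul_trace μ hπ hπ b b, LinearMap.trace_eq_sum_inner _ b, Finset.mul_sum]
  simp only [hcoef, ← Finset.mul_sum, hrow, LinearMap.comp_apply]

end MatrixCoefficients

theorem twisted_orthogonality_general
    {G : Type*} [Group G] [TopologicalSpace G] [IsTopologicalGroup G]
    [CompactSpace G] [MeasurableSpace G] [BorelSpace G]
    (μ : Measure G) [μ.IsHaarMeasure] [IsProbabilityMeasure μ]
    {V : Type*} [NormedAddCommGroup V] [InnerProductSpace ℂ V] [FiniteDimensional ℂ V]
    {W : Type*} [NormedAddCommGroup W] [InnerProductSpace ℂ W] [FiniteDimensional ℂ W]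
    (π : G →* (V →ₗ[ℂ] V)) (ρ : G →* (W →ₗ[ℂ] W))
    (hπrep : IsContUnitaryRep π) (hπirr : IsIrreducibleRep π)
    (hρrep : IsContUnitaryRep ρ) (hρirr : IsIrreducibleRep ρ)
    (T : V →ₗ[ℂ] V) (T' : W →ₗ[ℂ] W) (A B : G) :
    (¬ RepIso π ρ →
      ∫ g, LinearMap.trace ℂ V (π (A * g) ∘ₗ T) * LinearMap.trace ℂ W (ρ (g⁻¹ * B) ∘ₗ T') ∂μ
        = 0) ∧
    ∀ S S' : V →ₗ[ℂ] V,
      ∫ g, LinearMap.trace ℂ V (π (A * g) ∘ₗ S) * LinearMap.trace ℂ V (π (g⁻¹ * B) ∘ₗ S') ∂μ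
        = (1 / (Module.finrank ℂ V : ℂ)) * LinearMap.trace ℂ V (π (A * B) ∘ₗ S' ∘ₗ S) := by
  simp only [trace_map_mul_comp π A]
  simp only [map_mul, Module.End.mul_eq_comp, LinearMap.comp_assoc]
  refine ⟨fun hπρ => integral_trace_mul_trace_eq_zero μ hπrep.1 hρrep.1 hπirr hρirr hπρ _ _,
    fun S S' => ?_⟩
  rw [integral_trace_mul_trace_self μ hπrep.1 hπirr]
  simp only [LinearMap.comp_assoc]

/-- Orthogonality relations with arbitrary linear maps inserted: for non-isomorphic
irreducibles `π`, `ρ` one has `∫ tr(π(A g) T) tr(ρ(g⁻¹ B) T') dμ(g) = 0`, while for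
`ρ = π` one has `∫ tr(π(A g) S) tr(π(g⁻¹ B) S') dμ(g) = tr(π(A B) S' S)/dim π`. -/
theorem twisted_orthogonality
    {G : Type*} [Group G] [TopologicalSpace G] [IsTopologicalGroup G]
    [CompactSpace G] [T2Space G] [MeasurableSpace G] [BorelSpace G]
    (μ : Measure G) [μ.IsHaarMeasure] [IsProbabilityMeasure μ]
    {V : Type*} [NormedAddCommGroup V] [InnerProductSpace ℂ V] [FiniteDimensional ℂ V]
    {W : Type*} [NormedAddCommGroup W] [InnerProductSpace ℂ W] [FiniteDimensional ℂ W]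
    (π : G →* (V →ₗ[ℂ] V)) (ρ : G →* (W →ₗ[ℂ] W))
    (hπrep : IsContUnitaryRep π) (hπirr : IsIrreducibleRep π)
    (hρrep : IsContUnitaryRep ρ) (hρirr : IsIrreducibleRep ρ)
    (T : V →ₗ[ℂ] V) (T' : W →ₗ[ℂ] W) (A B : G) :
    (¬ RepIso π ρ →
      ∫ g, LinearMap.trace ℂ V (π (A * g) ∘ₗ T) * LinearMap.trace ℂ W (ρ (g⁻¹ * B) ∘ₗ T') ∂μ
        = 0) ∧
    ∀ S S' : V →ₗ[ℂ] V,
      ∫ g, LinearMap.trace ℂ V (π (A * g) ∘ₗ S) * LinearMap.trace ℂ V (π (g⁻¹ * B) ∘ₗ S') ∂μ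
        = (1 / (Module.finrank ℂ V : ℂ)) * LinearMap.trace ℂ V (π (A * B) ∘ₗ S' ∘ₗ S) :=
  twisted_orthogonality_general μ π ρ hπrep hπirr hρrep hρirr T T' A B
end

section
/- Let G be a compact Hausdorff topological group with normalized Haar probability measure μ and Γ a finite group acting on G by continuous group automorphisms, with semidirect product G ⋊ Γ having multiplication (g,φ)·(g',φ') = (g·φ(g'), φφ'). For μ-integrable f, g: G → ℂ and φ, γ ∈ Γ, define F, H: G ⋊ Γ → ℂ by F(x,σ) = f(x) if σ = φ and 0 otherwise, and H(x,σ) = g(x) if σ = γ and 0 otherwise. Then for all (x,σ) ∈ G ⋊ Γ: (F ⋆ H)(x,σ) = (1/|Γ|)·(f ⋆ (g∘φ⁻¹))(x) if σ = φγ, and (F ⋆ H)(x,σ) = 0 otherwise. (This is the multiplicativity of the isomorphism Φ: L²(G) ⋊ L²(Γ) → L²(G ⋊ Γ) of regularised Frobenius algebras.) -/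
open MeasureTheory

/-- Convolution with respect to a measure `μ` on a group `G`. -/
noncomputable def conv {G : Type*} [Group G] [MeasurableSpace G]
    (μ : Measure G) (u v : G → ℂ) : G → ℂ :=
  fun x => ∫ y, u y * v (y⁻¹ * x) ∂μ

/-- Convolution on the semidirect product `G ⋊ Γ` of a compact group `G` with Haar
probability measure `μ` and a finite group `Γ`:
`(F ⋆ H)(x,σ) = (1/|Γ|) Σ_κ ∫ F(y,κ) H((y,κ)⁻¹ (x,σ)) dμ(y)`. -/
noncomputable def convSD {G Γ : Type*} [Group G] [Group Γ] [Fintype Γ]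
    [MeasurableSpace G] (μ : Measure G) (act : Γ →* MulAut G)
    (F H : G ⋊[act] Γ → ℂ) : G ⋊[act] Γ → ℂ :=
  fun v => (1 / (Fintype.card Γ : ℂ)) *
    ∑ κ : Γ, ∫ y, F ⟨y, κ⟩ * H ((⟨y, κ⟩ : G ⋊[act] Γ)⁻¹ * v) ∂μ

theorem SemidirectProduct.mk_inv_mul_mk {N G : Type*} [Group N] [Group G]
    {ψ : G →* MulAut N} (y x : N) (κ σ : G) :
    (⟨y, κ⟩ : N ⋊[ψ] G)⁻¹ * ⟨x, σ⟩ = ⟨ψ κ⁻¹ (y⁻¹ * x), κ⁻¹ * σ⟩ := by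
  ext <;> simp [map_mul]

theorem convSD_mk_of_eq_zero_off_sector {G Γ : Type*} [Group G] [Group Γ] [Fintype Γ]
    [MeasurableSpace G] (μ : Measure G) (act : Γ →* MulAut G) {F : G ⋊[act] Γ → ℂ} {φ : Γ}
    (hF : ∀ (y : G) (κ : Γ), κ ≠ φ → F ⟨y, κ⟩ = 0) (H : G ⋊[act] Γ → ℂ) (x : G) (σ : Γ) :
    convSD μ act F H ⟨x, σ⟩ = (1 / (Fintype.card Γ : ℂ)) *
      ∫ y, F ⟨y, φ⟩ * H ⟨act φ⁻¹ (y⁻¹ * x), φ⁻¹ * σ⟩ ∂μ := by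
  rw [convSD, Fintype.sum_eq_single φ fun κ hκ => by
    simp only [hF _ κ hκ, zero_mul, integral_zero]]
  simp only [SemidirectProduct.mk_inv_mul_mk]

theorem convSD_single_sector_general
    {G : Type*} [Group G] [MeasurableSpace G]
    (μ : Measure G)
    {Γ : Type*} [Group Γ] [Fintype Γ] [DecidableEq Γ]
    (act : Γ →* MulAut G)
    (f g : G → ℂ)
    (φ γ : Γ) (F H : G ⋊[act] Γ → ℂ)
    (hF : ∀ (x : G) (σ : Γ), F ⟨x, σ⟩ = if σ = φ then f x else 0)
    (hH : ∀ (x : G) (σ : Γ), H ⟨x, σ⟩ = if σ = γ then g x else 0) :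
    ∀ (x : G) (σ : Γ),
      convSD μ act F H ⟨x, σ⟩
        = if σ = φ * γ
            then (1 / (Fintype.card Γ : ℂ)) * conv μ f (fun z => g ((act φ).symm z)) x
            else 0 := by
  intro x σ
  rw [convSD_mk_of_eq_zero_off_sector μ act (fun y κ hκ => by rw [hF, if_neg hκ])]
  split_ifs with hσ
  · subst hσ
    simp only [hF, hH, if_pos, inv_mul_cancel_left, map_inv, MulAut.inv_apply, conv]
  · have hH_zero (z : G) : H ⟨z, φ⁻¹ * σ⟩ = 0 := by
      rw [hH, if_neg fun h => hσ (by rw [← h, mul_inv_cancel_left])]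
    simp only [hH_zero, mul_zero, integral_zero]

/-- Multiplicativity of the isomorphism `Φ : L²(G) ⋊ L²(Γ) → L²(G ⋊ Γ)`: convolving the
functions supported in single `Γ`-sectors reproduces the twisted product
`(f ⊗ δ_φ) * (g ⊗ δ_γ) = (f ⋆ (g∘φ⁻¹)) ⊗ δ_{φγ}` up to the factor `1/|Γ|`. -/
theorem convSD_single_sector
    {G : Type*} [Group G] [TopologicalSpace G] [IsTopologicalGroup G]
    [CompactSpace G] [T2Space G] [MeasurableSpace G] [BorelSpace G]
    (μ : Measure G) [μ.IsHaarMeasure] [IsProbabilityMeasure μ]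
    {Γ : Type*} [Group Γ] [Fintype Γ] [DecidableEq Γ]
    (act : Γ →* MulAut G) (hact : ∀ γ : Γ, Continuous (act γ))
    (f g : G → ℂ) (hf : Integrable f μ) (hg : Integrable g μ)
    (φ γ : Γ) (F H : G ⋊[act] Γ → ℂ)
    (hF : ∀ (x : G) (σ : Γ), F ⟨x, σ⟩ = if σ = φ then f x else 0)
    (hH : ∀ (x : G) (σ : Γ), H ⟨x, σ⟩ = if σ = γ then g x else 0) :
    ∀ (x : G) (σ : Γ),
      convSD μ act F H ⟨x, σ⟩
        = if σ = φ * γ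
            then (1 / (Fintype.card Γ : ℂ)) * conv μ f (fun z => g ((act φ).symm z)) x
            else 0 :=
  convSD_single_sector_general μ act f g φ γ F H hF hH
end
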